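/- The FEF of the Werner state ρ_wer(f) = ((d−f)/(d³−d)) I + ((df−1)/(d³−d)) V on C^d ⊗ C^d with d even equals (f+1)/(d(d+1)) for 1/d ≤ f ≤ 1, and (1−f)/(d(d−1)) for −1 ≤ f < 1/d. -/

import Mathlib

/-!
For a unit vector `x`, `⟨x| ρ_wer(f) |x⟩ = a + b · Re ⟨x| V |x⟩` with `b = (df - 1)/(d³ - d)`,
and `|Re ⟨x| V |x⟩| ≤ 1` because `V` only permutes coordinates. For `x = (U ⊗ I) ψ⁺` one has
`V x = (Uᵀ ⊗ I) ψ⁺`, so the bound is attained at `+1` by `U = I` and at `-1` by any antisymmetric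
unitary, e.g. the symplectic matrix `J = [[0, -1], [1, 0]] ⊗ I` when `d` is even. Which of the two
is optimal depends on the sign of `b`, i.e. on whether `f ≥ 1/d`.
-/

open Matrix Complex BigOperators Finset

noncomputable section

/-- The maximally entangled state `|ψ⁺⟩ = (1/√d) ∑ₖ |kk⟩` on `ℂ^d ⊗ ℂ^d`. -/
def psiPlus (d : ℕ) : (Fin d × Fin d) → ℂ :=
  fun p => if p.1 = p.2 then ((1 / Real.sqrt d : ℝ) : ℂ) else 0

/-- `U ⊗ I` acting on `ℂ^d ⊗ ℂ^d`. -/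
def tensorI {d : ℕ} (U : Matrix (Fin d) (Fin d) ℂ) :
    Matrix (Fin d × Fin d) (Fin d × Fin d) ℂ :=
  fun p q => U p.1 q.1 * (if p.2 = q.2 then 1 else 0)

/-- The rank-one projector `|ψ⟩⟨ψ|`. -/
def outer {n : Type*} [Fintype n] (ψ : n → ℂ) : Matrix n n ℂ :=
  Matrix.vecMulVec ψ (star ψ)

/-- The fully entangled fraction
`F(ρ) = max_U ⟨ψ⁺| (U† ⊗ I) ρ (U ⊗ I) |ψ⁺⟩`. -/
def fef (d : ℕ) (ρ : Matrix (Fin d × Fin d) (Fin d × Fin d) ℂ) : ℝ :=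
  sSup { x : ℝ | ∃ U ∈ Matrix.unitaryGroup (Fin d) ℂ,
    x = (star (tensorI U *ᵥ psiPlus d) ⬝ᵥ (ρ *ᵥ (tensorI U *ᵥ psiPlus d))).re }

/-- The swap operator `V = ∑_{ij} |ij⟩⟨ji|`. -/
def swapOp (d : ℕ) : Matrix (Fin d × Fin d) (Fin d × Fin d) ℂ :=
  fun p q => if p.1 = q.2 ∧ p.2 = q.1 then 1 else 0

/-- The Werner state on `ℂ^d ⊗ ℂ^d`. -/
def werner (d : ℕ) (f : ℝ) : Matrix (Fin d × Fin d) (Fin d × Fin d) ℂ :=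
  (((d : ℝ) - f) / ((d : ℝ) ^ 3 - d)) •
      (1 : Matrix (Fin d × Fin d) (Fin d × Fin d) ℂ) +
    (((d : ℝ) * f - 1) / ((d : ℝ) ^ 3 - d)) • swapOp d

namespace Matrix

variable {ι R : Type*} [Fintype ι] [DecidableEq ι]

theorem reindex_mem_unitaryGroup {κ : Type*} [Fintype κ] [DecidableEq κ] [CommRing R]
    [StarRing R] (e : ι ≃ κ) {U : Matrix ι ι R} (hU : U ∈ unitaryGroup ι R) :
    reindex e e U ∈ unitaryGroup κ R := by
  rw [mem_unitaryGroup_iff'] at hU ⊢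
  rw [star_eq_conjTranspose, conjTranspose_reindex, reindex_apply, reindex_apply,
    submatrix_mul_equiv, ← star_eq_conjTranspose, hU, submatrix_one_equiv]

theorem J_mem_unitaryGroup [CommRing R] [StarRing R] :
    J ι R ∈ unitaryGroup (ι ⊕ ι) R := by
  have hstar : star (J ι R) = -J ι R := by
    rw [star_eq_conjTranspose, conjTranspose, J_transpose, Matrix.map_neg _ star_neg]
    exact congrArg Neg.neg (map_J ι (starRingEnd R))
  rw [mem_unitaryGroup_iff', hstar, Matrix.neg_mul, J_squared, neg_neg]

theorem exists_mem_unitaryGroup_transpose_eq_neg [CommRing R] [StarRing R] {d : ℕ}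
    (hd : Even d) : ∃ U ∈ unitaryGroup (Fin d) R, Uᵀ = -U := by
  obtain ⟨m, rfl⟩ := hd
  refine ⟨reindex finSumFinEquiv finSumFinEquiv (J (Fin m) R),
    reindex_mem_unitaryGroup _ J_mem_unitaryGroup, ?_⟩
  rw [transpose_reindex, J_transpose]
  rfl

end Matrix

section DotProduct

variable {n : Type*} [Fintype n]

open scoped ComplexOrder in
theorem two_mul_re_star_dotProduct_le (x y : n → ℂ) :
    2 * (star x ⬝ᵥ y).re ≤ (star x ⬝ᵥ x).re + (star y ⬝ᵥ y).re := by
  have hsub : 0 ≤ (star (x - y) ⬝ᵥ (x - y)).re :=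
    (Complex.nonneg_iff.mp (dotProduct_star_self_nonneg (x - y))).1
  have hyx : (star y ⬝ᵥ x).re = (star x ⬝ᵥ y).re := by
    rw [star_dotProduct, Complex.star_def, Complex.conj_re]
  simp only [star_sub, sub_dotProduct, dotProduct_sub, Complex.sub_re, hyx] at hsub
  linarith

theorem star_comp_swap_dotProduct_comp_swap {m : Type*} [Fintype m] (x y : n × m → ℂ) :
    star (x ∘ Prod.swap) ⬝ᵥ (y ∘ Prod.swap) = star x ⬝ᵥ y :=
  Equiv.sum_comp (Equiv.prodComm m n) fun p => star x p * y p

theorem abs_re_star_dotProduct_comp_swap_le_one (x : n × n → ℂ) (hx : star x ⬝ᵥ x = 1) :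
    |(star x ⬝ᵥ (x ∘ Prod.swap)).re| ≤ 1 := by
  have hswap : star (x ∘ Prod.swap) ⬝ᵥ (x ∘ Prod.swap) = 1 :=
    (star_comp_swap_dotProduct_comp_swap x x).trans hx
  have hle := two_mul_re_star_dotProduct_le x (x ∘ Prod.swap)
  have hge := two_mul_re_star_dotProduct_le x (-(x ∘ Prod.swap))
  simp only [star_neg, dotProduct_neg, neg_dotProduct, neg_neg, Complex.neg_re, hx,
    hswap, Complex.one_re] at hle hge
  rw [abs_le]
  constructor <;> linarith

end DotProduct

section Werner

variable {d : ℕ}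

theorem swapOp_mulVec (x : Fin d × Fin d → ℂ) : swapOp d *ᵥ x = x ∘ Prod.swap := by
  ext p
  rw [mulVec, dotProduct, Finset.sum_eq_single p.swap]
  · simp [swapOp]
  · rintro q - hq
    simp only [swapOp, ite_mul, one_mul, zero_mul]
    grind
  · simp

theorem re_star_dotProduct_werner_mulVec (f : ℝ) (x : Fin d × Fin d → ℂ)
    (hx : star x ⬝ᵥ x = 1) :
    (star x ⬝ᵥ (werner d f *ᵥ x)).re = ((d : ℝ) - f) / ((d : ℝ) ^ 3 - d) +
      ((d : ℝ) * f - 1) / ((d : ℝ) ^ 3 - d) * (star x ⬝ᵥ (x ∘ Prod.swap)).re := by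
  simp only [werner, add_mulVec, smul_mulVec, one_mulVec, swapOp_mulVec, dotProduct_add,
    dotProduct_smul, hx, Complex.add_re, Complex.smul_re, Complex.one_re, smul_eq_mul, mul_one]

theorem tensorI_smul (c : ℂ) (U : Matrix (Fin d) (Fin d) ℂ) :
    tensorI (c • U) = c • tensorI U := by
  ext p q
  simp [tensorI]

theorem tensorI_mulVec_psiPlus (U : Matrix (Fin d) (Fin d) ℂ) :
    tensorI U *ᵥ psiPlus d = ((1 / Real.sqrt d : ℝ) : ℂ) • vec Uᵀ := by
  ext p
  rw [mulVec, dotProduct, Finset.sum_eq_single (p.2, p.2)]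
  · simp [tensorI, psiPlus, mul_comm]
  · rintro q - hq
    simp only [tensorI, psiPlus]
    grind
  · simp

theorem tensorI_mulVec_psiPlus_comp_swap (U : Matrix (Fin d) (Fin d) ℂ) :
    (tensorI U *ᵥ psiPlus d) ∘ Prod.swap = tensorI Uᵀ *ᵥ psiPlus d := by
  rw [tensorI_mulVec_psiPlus, tensorI_mulVec_psiPlus]
  rfl

theorem star_tensorI_mulVec_psiPlus_dotProduct_self (hd : d ≠ 0) {U : Matrix (Fin d) (Fin d) ℂ}
    (hU : U ∈ unitaryGroup (Fin d) ℂ) :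
    star (tensorI U *ᵥ psiPlus d) ⬝ᵥ (tensorI U *ᵥ psiPlus d) = 1 := by
  have htrace : star (vec Uᵀ) ⬝ᵥ vec Uᵀ = d := by
    rw [star_vec_dotProduct_vec, conjTranspose_transpose_eq_transpose_conjTranspose,
      ← transpose_mul, trace_transpose, ← star_eq_conjTranspose, mem_unitaryGroup_iff.mp hU,
      trace_one, Fintype.card_fin]
  have hsqrt : (Real.sqrt d : ℂ) ^ 2 = d := by
    rw [← Complex.ofReal_pow, Real.sq_sqrt (Nat.cast_nonneg d), Complex.ofReal_natCast]
  rw [tensorI_mulVec_psiPlus, star_smul, smul_dotProduct, dotProduct_smul, htrace]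
  simp only [one_div, Complex.ofReal_inv, star_inv₀, Complex.star_def, Complex.conj_ofReal,
    smul_eq_mul]
  rw [← mul_assoc, ← mul_inv, ← sq, hsqrt, inv_mul_cancel₀ (Nat.cast_ne_zero.mpr hd)]

theorem fef_werner_eq_of_transpose_eq_smul (hd : d ≠ 0) (f : ℝ)
    {U₀ : Matrix (Fin d) (Fin d) ℂ} (hU₀ : U₀ ∈ unitaryGroup (Fin d) ℂ) {s : ℝ}
    (hT : U₀ᵀ = (s : ℂ) • U₀)
    (hs : ((d : ℝ) * f - 1) / ((d : ℝ) ^ 3 - d) * s = |((d : ℝ) * f - 1) / ((d : ℝ) ^ 3 - d)|) :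
    fef d (werner d f) =
      ((d : ℝ) - f) / ((d : ℝ) ^ 3 - d) + ((d : ℝ) * f - 1) / ((d : ℝ) ^ 3 - d) * s := by
  have hnorm := fun {U} (hU : U ∈ unitaryGroup (Fin d) ℂ) =>
    star_tensorI_mulVec_psiPlus_dotProduct_self hd hU
  apply IsGreatest.csSup_eq
  refine ⟨⟨U₀, hU₀, ?_⟩, ?_⟩
  · rw [re_star_dotProduct_werner_mulVec f _ (hnorm hU₀), tensorI_mulVec_psiPlus_comp_swap, hT,
      tensorI_smul, smul_mulVec, dotProduct_smul, hnorm hU₀, smul_eq_mul, mul_one,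
      Complex.ofReal_re]
  · rintro _ ⟨U, hU, rfl⟩
    rw [re_star_dotProduct_werner_mulVec f _ (hnorm hU), hs]
    have hswap := abs_re_star_dotProduct_comp_swap_le_one _ (hnorm hU)
    gcongr
    exact (le_abs_self _).trans (by rw [abs_mul]; exact mul_le_of_le_one_right (abs_nonneg _) hswap)

end Werner

/-- FEF of the Werner state for even `d`: `(f+1)/(d(d+1))` for `1/d ≤ f ≤ 1`,
and `(1−f)/(d(d−1))` for `−1 ≤ f < 1/d`. -/
theorem fef_werner_even (d : ℕ) (hd : 2 ≤ d) (heven : Even d) (f : ℝ) :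
    (1 / (d : ℝ) ≤ f → f ≤ 1 →
      fef d (werner d f) = (f + 1) / ((d : ℝ) * ((d : ℝ) + 1))) ∧
    (-1 ≤ f → f < 1 / (d : ℝ) →
      fef d (werner d f) = (1 - f) / ((d : ℝ) * ((d : ℝ) - 1))) := by
  have hdR : (2 : ℝ) ≤ d := by exact_mod_cast hd
  have hd0 : d ≠ 0 := by omega
  have hd1 : 0 < (d : ℝ) - 1 := by linarith
  have hfactor : (d : ℝ) ^ 3 - d = d * ((d - 1) * (d + 1)) := by ring
  have hcube : 0 < (d : ℝ) ^ 3 - d := by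
    rw [hfactor]
    exact mul_pos (by positivity) (mul_pos hd1 (by positivity))
  refine ⟨fun hf _ => ?_, fun _ hf => ?_⟩
  · have hb : 0 ≤ ((d : ℝ) * f - 1) / ((d : ℝ) ^ 3 - d) := by
      rw [div_le_iff₀ (by positivity)] at hf
      exact div_nonneg (by linarith) hcube.le
    rw [fef_werner_eq_of_transpose_eq_smul hd0 f (one_mem _) (s := 1) (by simp)
      (by rw [mul_one, abs_of_nonneg hb]), hfactor]
    field_simp
    ring
  · obtain ⟨U, hU, hUT⟩ := exists_mem_unitaryGroup_transpose_eq_neg (R := ℂ) heven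
    have hb : ((d : ℝ) * f - 1) / ((d : ℝ) ^ 3 - d) ≤ 0 := by
      rw [lt_div_iff₀ (by positivity)] at hf
      exact div_nonpos_of_nonpos_of_nonneg (by linarith) hcube.le
    rw [fef_werner_eq_of_transpose_eq_smul hd0 f hU (s := -1) (by simp [hUT])
      (by rw [mul_neg_one, abs_of_nonpos hb]), hfactor]
    field_simp
    ring
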